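/- arXiv:2003.03857 — 4 statements merged into one kernel-verified Lean document; each statement's English description precedes it below -/
import Mathlib

section
/- The number of canonical r-paths of length k having no simple vertex (i.e., every value appearing in the path appears at least twice) equals the 2-associated Stirling number of the second kind B_2(k,r), where B_2(k,r) = (k!/r!) * Σ over (j_1,...,j_r) with j_1 + ... + j_r = k and each j_ℓ ≥ 2 of 1/(j_1! ⋯ j_r!). -/
/-- A path `I = (i_1, …, i_k)` of positive integers is canonical if `i_1 = 1` and
`i_l ≤ max{i_1, …, i_{l-1}} + 1` for every `l ≥ 2`. -/
def IsCanonical {k : ℕ} (I : Fin k → ℕ) : Prop :=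
  (∀ l, 1 ≤ I l) ∧
  ∀ l : Fin k, I l ≤ ((Finset.univ.filter fun m : Fin k => m < l).sup fun m => I m) + 1

/-!
A function `g : Fin k → Fin r` whose fibres all have at least two elements factors uniquely as
`σ ∘ I`, with `σ` a bijection `{1, …, r} ≃ Fin r` and `I` a canonical `r`-path without simple
vertex: `I` numbers the values of `g` in the order of their first occurrence, and a canonical path
is determined by which of its positions carry equal values. Hence `r!` times the number of such
paths is the number of such functions, and sorting the functions by their fibre sizes
`(j_1, …, j_r)` gives `∑ k! / (j_1! ⋯ j_r!)`, each term counting the functions with those fibre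
sizes.
-/

open Finset
open scoped Nat

namespace IsCanonical

variable {k : ℕ} {I : Fin k → ℕ}

theorem image_prefix_eq_Icc (hI : IsCanonical I) (t : ℕ) :
    (univ.filter fun m : Fin k => (m : ℕ) < t).image I =
      Icc 1 ((univ.filter fun m : Fin k => (m : ℕ) < t).sup I) := by
  induction t with
  | zero => simp
  | succ t ih =>
    rcases lt_or_ge t k with ht | ht
    · have hinsert : (univ.filter fun m : Fin k => (m : ℕ) < t + 1) =
          insert ⟨t, ht⟩ (univ.filter fun m : Fin k => (m : ℕ) < t) := by
        ext m; simp only [mem_filter, mem_univ, true_and, mem_insert, Fin.ext_iff]; omega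
      have hpos : 1 ≤ I ⟨t, ht⟩ := hI.1 _
      have hstep : I ⟨t, ht⟩ ≤ (univ.filter fun m : Fin k => (m : ℕ) < t).sup I + 1 :=
        hI.2 ⟨t, ht⟩
      rw [hinsert, image_insert, sup_insert, ih]
      ext x
      simp only [mem_insert, mem_Icc]
      omega
    · have hsame : (univ.filter fun m : Fin k => (m : ℕ) < t + 1) =
          univ.filter fun m : Fin k => (m : ℕ) < t :=
        filter_congr fun m _ => by omega
      rw [hsame, ih]

theorem image_univ_eq_Icc (hI : IsCanonical I) : univ.image I = Icc 1 (univ.sup I) := by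
  simpa using hI.image_prefix_eq_Icc k

theorem image_univ_eq_Icc_of_card_eq {r : ℕ} (hI : IsCanonical I)
    (hr : #(univ.image I) = r) : univ.image I = Icc 1 r := by
  rw [hI.image_univ_eq_Icc, Nat.card_Icc, Nat.add_sub_cancel] at hr
  rw [hI.image_univ_eq_Icc, hr]

theorem eq_sup_add_one_of_forall_ne (hI : IsCanonical I) {l : Fin k}
    (hl : ∀ m < l, I m ≠ I l) : I l = (univ.filter fun m : Fin k => m < l).sup I + 1 := by
  have hnew : I l ∉ (univ.filter fun m : Fin k => (m : ℕ) < l).image I := by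
    simpa using fun m hm => hl m hm
  rw [hI.image_prefix_eq_Icc, mem_Icc] at hnew
  have hpos : 1 ≤ I l := hI.1 l
  have hstep : I l ≤ (univ.filter fun m : Fin k => (m : ℕ) < l).sup I + 1 := hI.2 l
  show I l = (univ.filter fun m : Fin k => (m : ℕ) < l).sup I + 1
  omega

end IsCanonical

theorem injOn_ker_isCanonical {k : ℕ} :
    Set.InjOn Setoid.ker {I : Fin k → ℕ | IsCanonical I} := by
  intro I hI I' hI' hker
  have hiff : ∀ l m, I l = I m ↔ I' l = I' m := fun l m => by
    rw [← Setoid.ker_def, ← Setoid.ker_def, hker]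
  funext l
  induction l using WellFoundedLT.induction with
  | _ l ih =>
    by_cases hold : ∃ m < l, I m = I l
    · obtain ⟨m, hm, he⟩ := hold
      rw [← he, ih m hm, (hiff m l).1 he]
    · push Not at hold
      have hold' : ∀ m < l, I' m ≠ I' l := fun m hm h => hold m hm ((hiff m l).2 h)
      rw [hI.eq_sup_add_one_of_forall_ne hold, hI'.eq_sup_add_one_of_forall_ne hold']
      congr 1
      exact sup_congr rfl fun m hm => ih m (mem_filter.1 hm).2

theorem exists_injective_isCanonical_comp {k : ℕ} {β : Type*} [Fintype β] [DecidableEq β]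
    {g : Fin k → β} (hg : Function.Surjective g) :
    ∃ F : β → ℕ, Function.Injective F ∧ IsCanonical (F ∘ g) := by
  have hne : ∀ b, (univ.filter fun l => g l = b).Nonempty := fun b =>
    (hg b).imp fun l hl => by simpa using hl
  set m : β → Fin k := fun b => (univ.filter fun l => g l = b).min' (hne b)
  have hgm : ∀ b, g (m b) = b := fun b => (mem_filter.1 (min'_mem _ (hne b))).2
  have hm_le : ∀ l, m (g l) ≤ l := fun l => min'_le _ _ (by simp)
  have hm_inj : Function.Injective m := Function.LeftInverse.injective hgm
  -- `F b` is the rank of the first occurrence of `b` among all first occurrences.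
  set F : β → ℕ := fun b => #(univ.filter fun c => m c ≤ m b)
  have hF_pos : ∀ b, 1 ≤ F b := fun b => card_pos.2 ⟨b, by simp⟩
  have hF_lt : ∀ b c, m b < m c → F b < F c := fun b c h => by
    refine card_lt_card ((ssubset_iff_of_subset fun x hx => ?_).2 ⟨c, by simp, by simpa using h⟩)
    simp only [mem_filter, mem_univ, true_and] at hx ⊢
    exact hx.trans h.le
  have hF_inj : Function.Injective F := fun b c h => hm_inj <| by
    rcases lt_trichotomy (m b) (m c) with hbc | hbc | hbc
    · exact absurd h (hF_lt b c hbc).ne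
    · exact hbc
    · exact absurd h (hF_lt c b hbc).ne'
  refine ⟨F, hF_inj, fun l => hF_pos (g l), fun l => ?_⟩
  set M := (univ.filter fun l' : Fin k => l' < l).sup fun l' => F (g l')
  have hbound : ∀ c, m c < l → F c ≤ M := fun c hc => by
    simpa only [hgm] using le_sup (f := fun l' => F (g l')) (mem_filter.2 ⟨mem_univ (m c), hc⟩)
  show F (g l) ≤ M + 1
  rcases (hm_le l).lt_or_eq with hlt | hfirst
  · exact (hbound _ hlt).trans M.le_succ
  · have hseen : #(univ.filter fun c => m c < l) ≤ M := by
      calc #(univ.filter fun c => m c < l) ≤ #(Icc 1 M) :=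
            card_le_card_of_injOn F
              (fun c hc => mem_Icc.2 ⟨hF_pos c, hbound c (mem_filter.1 hc).2⟩) hF_inj.injOn
        _ = M := by simp
    have hinsert : (univ.filter fun c => m c ≤ m (g l)) =
        insert (g l) (univ.filter fun c => m c < l) := by
      ext c
      simp only [mem_filter, mem_univ, true_and, mem_insert, le_iff_lt_or_eq, hfirst,
        ← hm_inj.eq_iff (b := g l)]
      tauto
    calc F (g l) = #(insert (g l) (univ.filter fun c => m c < l)) := congrArg card hinsert
      _ ≤ M + 1 := (card_insert_le _ _).trans (by omega)

abbrev CanonicalPath (k r : ℕ) := {I : Fin k → ℕ // IsCanonical I ∧ #(univ.image I) = r}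

namespace CanonicalPath

variable {k r : ℕ} {β : Type*}

theorem image_eq_Icc (I : CanonicalPath k r) : univ.image I.1 = Icc 1 r :=
  I.2.1.image_univ_eq_Icc_of_card_eq I.2.2

theorem apply_mem_Icc (I : CanonicalPath k r) (l : Fin k) : I.1 l ∈ Icc 1 r :=
  I.image_eq_Icc ▸ mem_image_of_mem I.1 (mem_univ l)

def relabel (σ : Icc 1 r ≃ β) (I : CanonicalPath k r) (l : Fin k) : β :=
  σ ⟨I.1 l, I.apply_mem_Icc l⟩

theorem ker_relabel (σ : Icc 1 r ≃ β) (I : CanonicalPath k r) :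
    Setoid.ker (relabel σ I) = Setoid.ker I.1 :=
  Setoid.ext fun l m => by
    simp only [Setoid.ker_def, relabel, σ.injective.eq_iff, Subtype.mk.injEq]

theorem card_fiber_relabel [DecidableEq β] (σ : Icc 1 r ≃ β) (I : CanonicalPath k r) (b : β) :
    #(univ.filter fun l => relabel σ I l = b) = #(univ.filter fun l => I.1 l = σ.symm b) := by
  simp only [relabel, ← σ.eq_symm_apply, Subtype.ext_iff]

theorem relabel_injective :
    Function.Injective fun p : (Icc 1 r ≃ β) × CanonicalPath k r => relabel p.1 p.2 := by
  rintro ⟨σ, I⟩ ⟨σ', I'⟩ h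
  have hI : I = I' := Subtype.ext <| injOn_ker_isCanonical I.2.1 I'.2.1 <| by
    rw [← ker_relabel σ I, ← ker_relabel σ' I']
    exact congrArg Setoid.ker h
  subst hI
  refine Prod.ext (Equiv.ext fun ⟨v, hv⟩ => ?_) rfl
  obtain ⟨l, -, rfl⟩ := mem_image.1 (I.image_eq_Icc ▸ hv)
  exact congrFun h l

theorem exists_relabel_eq [Fintype β] [DecidableEq β] (hβ : Fintype.card β = r) {g : Fin k → β}
    (hg : Function.Surjective g) :
    ∃ (σ : Icc 1 r ≃ β) (I : CanonicalPath k r), relabel σ I = g := by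
  obtain ⟨F, hF_inj, hF_can⟩ := exists_injective_isCanonical_comp hg
  have himage : univ.image (F ∘ g) = univ.image F := by
    rw [← image_image, image_univ_of_surjective hg]
  have hcard : #(univ.image (F ∘ g)) = r := by
    rw [himage, card_image_of_injective _ hF_inj, card_univ, hβ]
  let I : CanonicalPath k r := ⟨F ∘ g, hF_can, hcard⟩
  have hF_mem : ∀ b, F b ∈ Icc 1 r := fun b => by
    rw [← I.image_eq_Icc]
    exact himage ▸ mem_image_of_mem F (mem_univ b)
  have hbij : Function.Bijective fun b => (⟨F b, hF_mem b⟩ : Icc 1 r) := by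
    refine (Fintype.bijective_iff_injective_and_card _).2 ⟨fun b c h => hF_inj ?_, by simp [hβ]⟩
    exact congrArg Subtype.val h
  exact ⟨(Equiv.ofBijective _ hbij).symm, I, funext fun l =>
    Equiv.ofBijective_symm_apply_apply _ hbij (g l)⟩

end CanonicalPath

section FiberProfiles

variable {α β : Type*} [Fintype α] [Fintype β] [DecidableEq β]

theorem exists_fiber_card_eq (f : β → ℕ) (hf : ∑ b, f b = Fintype.card α) :
    ∃ g : α → β, ∀ b, #(univ.filter fun a => g a = b) = f b := by
  obtain e : (Σ b, Fin (f b)) ≃ α := Fintype.equivOfCardEq (by simp [hf])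
  refine ⟨fun a => (e.symm a).1, fun b => ?_⟩
  rw [← Fintype.card_subtype, ← Fintype.card_fin (f b)]
  exact Fintype.card_congr ((e.symm.subtypeEquiv fun _ => Iff.rfl).trans (Equiv.sigmaSubtype b))

theorem card_fiber_card_eq_mul_prod_factorial [DecidableEq α] (f : β → ℕ)
    (hf : ∑ b, f b = Fintype.card α) :
    #(univ.filter fun g : α → β => ∀ b, #(univ.filter fun a => g a = b) = f b) *
      ∏ b, (f b)! = (Fintype.card α)! := by
  obtain ⟨g₀, hg₀⟩ := exists_fiber_card_eq f hf
  set S := univ.filter fun g : α → β => ∀ b, #(univ.filter fun a => g a = b) = f b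
  -- Every `g ∈ S` is `g₀ ∘ π` for exactly `∏ b, (f b)!` permutations `π` of `α`.
  have hmaps : ∀ π : Equiv.Perm α, g₀ ∘ π ∈ S := fun π => by
    refine mem_filter.2 ⟨mem_univ _, fun b => ?_⟩
    rw [← hg₀ b]
    exact card_equiv π (by simp)
  have hfiber : ∀ g ∈ S, #(univ.filter fun π : Equiv.Perm α => g₀ ∘ π = g) = ∏ b, (f b)! := by
    intro g hg
    obtain ⟨π₀, hπ₀⟩ : ∃ π₀ : Equiv.Perm α, g₀ ∘ π₀ = g := by
      have hcard : ∀ b, #(univ.filter fun a => g a = b) = #(univ.filter fun a => g₀ a = b) :=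
        fun b => ((mem_filter.1 hg).2 b).trans (hg₀ b).symm
      refine ⟨Equiv.ofFiberEquiv (f := g) (g := g₀) fun b => Fintype.equivOfCardEq ?_, ?_⟩
      · simpa only [Fintype.card_subtype] using hcard b
      · funext a; exact Equiv.ofFiberEquiv_map _ a
    rw [← Fintype.card_subtype]
    calc Fintype.card {π : Equiv.Perm α // g₀ ∘ π = g}
        = Fintype.card {σ : Equiv.Perm α // g₀ ∘ σ = g₀} :=
          Fintype.card_congr <| (Equiv.mulRight π₀⁻¹).subtypeEquiv fun π => by
            rw [← hπ₀, Equiv.coe_mulRight, Equiv.Perm.coe_mul, Equiv.Perm.inv_def,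
              ← Function.comp_assoc, Equiv.comp_symm_eq]
      _ = ∏ b, (f b)! := by
          rw [DomMulAct.stabilizer_card g₀]
          simp only [Fintype.card_subtype, hg₀]
  have hcount := card_eq_sum_card_fiberwise (s := univ) (t := S) fun π _ => hmaps π
  rw [sum_congr rfl hfiber, sum_const, smul_eq_mul, card_univ, Fintype.card_perm] at hcount
  exact hcount.symm

theorem card_fiber_card_eq_multinomial [DecidableEq α] (f : β → ℕ)
    (hf : ∑ b, f b = Fintype.card α) :
    #(univ.filter fun g : α → β => ∀ b, #(univ.filter fun a => g a = b) = f b) =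
      Nat.multinomial univ f := by
  have hspec := Nat.multinomial_spec univ f
  rw [hf, ← card_fiber_card_eq_mul_prod_factorial f hf, mul_comm] at hspec
  exact Nat.eq_of_mul_eq_mul_right (Nat.prod_factorial_pos _ _) hspec.symm

end FiberProfiles

theorem card_filter_fiber_card_eq_sum_multinomial (k r : ℕ) (p : (Fin r → ℕ) → Prop)
    [DecidablePred p] :
    #(univ.filter fun g : Fin k → Fin r => p fun i => #(univ.filter fun l => g l = i)) =
      ∑ f ∈ (Nat.antidiagonalTuple r k).filter p, Nat.multinomial univ f := by
  set profile : (Fin k → Fin r) → Fin r → ℕ := fun g i => #(univ.filter fun l => g l = i)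
  have hmaps : ∀ g ∈ univ.filter fun g => p (profile g),
      profile g ∈ (Nat.antidiagonalTuple r k).filter p := fun g hg => by
    refine mem_filter.2 ⟨Nat.mem_antidiagonalTuple.2 ?_, (mem_filter.1 hg).2⟩
    simpa using (card_eq_sum_card_fiberwise (s := univ) fun l _ => mem_univ (g l)).symm
  rw [card_eq_sum_card_fiberwise hmaps]
  refine sum_congr rfl fun f hf => ?_
  have hsum : ∑ i, f i = Fintype.card (Fin k) := by
    simpa using Nat.mem_antidiagonalTuple.1 (mem_filter.1 hf).1
  rw [← card_fiber_card_eq_multinomial f hsum]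
  congr 1
  ext g
  simp only [mem_filter, mem_univ, true_and, funext_iff]
  exact ⟨fun h => h.2, fun h => ⟨(funext h : profile g = f) ▸ (mem_filter.1 hf).2, h⟩⟩

theorem factorial_mul_ncard_eq_card {k r n : ℕ} {β : Type*} [Fintype β] [DecidableEq β]
    (hβ : Fintype.card β = r) (hn : 0 < n) :
    r ! * {I : Fin k → ℕ | IsCanonical I ∧ #(univ.image I) = r ∧
        ∀ v ∈ univ.image I, n ≤ #(univ.filter fun l => I l = v)}.ncard =
      #(univ.filter fun g : Fin k → β => ∀ b, n ≤ #(univ.filter fun l => g l = b)) := by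
  set Q : (Fin k → ℕ) → Prop := fun I => ∀ v ∈ univ.image I, n ≤ #(univ.filter fun l => I l = v)
  let ψ : (Icc 1 r ≃ β) × {I : CanonicalPath k r // Q I.1} →
      {g : Fin k → β // ∀ b, n ≤ #(univ.filter fun l => g l = b)} := fun p =>
    ⟨CanonicalPath.relabel p.1 p.2.1, fun b => by
      rw [CanonicalPath.card_fiber_relabel]
      exact p.2.2 _ (by rw [p.2.1.image_eq_Icc]; exact (p.1.symm b).2)⟩
  have hψ : Function.Bijective ψ := by
    refine ⟨fun p q h => ?_, fun ⟨g, hg⟩ => ?_⟩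
    · have hpq := CanonicalPath.relabel_injective (a₁ := (p.1, p.2.1)) (a₂ := (q.1, q.2.1))
        (congrArg Subtype.val h)
      rw [Prod.mk.injEq] at hpq
      exact Prod.ext hpq.1 (Subtype.ext hpq.2)
    · have hsurj : Function.Surjective g := fun b => by
        obtain ⟨l, hl⟩ := card_pos.1 (hn.trans_le (hg b))
        exact ⟨l, (mem_filter.1 hl).2⟩
      obtain ⟨σ, I, rfl⟩ := CanonicalPath.exists_relabel_eq hβ hsurj
      refine ⟨(σ, ⟨I, fun v hv => ?_⟩), rfl⟩
      rw [I.image_eq_Icc] at hv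
      simpa [CanonicalPath.card_fiber_relabel] using hg (σ ⟨v, hv⟩)
  have hσ : Nat.card (Icc 1 r ≃ β) = r ! := by
    have e : Icc 1 r ≃ β := Fintype.equivOfCardEq (by simp [hβ])
    rw [Nat.card_eq_fintype_card, Fintype.card_equiv e]
    simp
  have hI : Nat.card {I : CanonicalPath k r // Q I.1} =
      {I : Fin k → ℕ | IsCanonical I ∧ #(univ.image I) = r ∧ Q I}.ncard := by
    rw [← Nat.card_coe_set_eq]
    exact Nat.card_congr ((Equiv.subtypeSubtypeEquivSubtypeInter _ _).trans
      (Equiv.subtypeEquivRight fun _ => and_assoc))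
  rw [← hσ, ← hI, ← Nat.card_prod, Nat.card_congr (Equiv.ofBijective ψ hψ),
    Nat.card_eq_fintype_card, Fintype.card_subtype]

theorem Nat.cast_multinomial_eq {K α : Type*} [Field K] [CharZero K] (s : Finset α)
    (f : α → ℕ) :
    (Nat.multinomial s f : K) = (∑ i ∈ s, f i)! * ∏ i ∈ s, 1 / ((f i)! : K) := by
  have hspec : ((∏ i ∈ s, (f i)! : ℕ) : K) * Nat.multinomial s f = (∑ i ∈ s, f i)! := by
    exact_mod_cast Nat.multinomial_spec s f
  have hprod : ∏ i ∈ s, ((f i)! : K) ≠ 0 :=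
    prod_ne_zero_iff.2 fun i _ => Nat.cast_ne_zero.2 (Nat.factorial_ne_zero _)
  rw [prod_div_distrib, prod_const_one, ← hspec, Nat.cast_prod, mul_one_div,
    mul_div_cancel_left₀ _ hprod]

theorem card_canonical_paths_no_simple_vertex_general (k r : ℕ) :
    ({I : Fin k → ℕ | IsCanonical I ∧ (Finset.image I Finset.univ).card = r ∧
        ∀ v ∈ Finset.image I Finset.univ,
          2 ≤ (Finset.univ.filter fun l : Fin k => I l = v).card}.ncard : ℚ)
      = ((Nat.factorial k : ℚ) / (Nat.factorial r : ℚ)) *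
          ∑ f ∈ (Finset.Nat.antidiagonalTuple r k).filter fun f => ∀ i, 2 ≤ f i,
            ∏ i, (1 : ℚ) / (Nat.factorial (f i) : ℚ) := by
  -- `convert` reconciles the two decidability instances of `∀ i : Fin r, _` in the filters.
  have hcount := (factorial_mul_ncard_eq_card (k := k) (n := 2) (Fintype.card_fin r)
    Nat.two_pos).trans
      (by convert card_filter_fiber_card_eq_sum_multinomial k r fun f => ∀ i, 2 ≤ f i)
  have hterm : ∀ f ∈ (Nat.antidiagonalTuple r k).filter fun f => ∀ i, 2 ≤ f i,
      (Nat.multinomial univ f : ℚ) = k ! * ∏ i, 1 / ((f i)! : ℚ) := fun f hf => by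
    rw [Nat.cast_multinomial_eq, Nat.mem_antidiagonalTuple.1 (mem_filter.1 hf).1]
  rw [div_mul_eq_mul_div, eq_div_iff (by positivity), mul_sum, ← sum_congr rfl hterm, mul_comm]
  exact_mod_cast hcount

theorem card_canonical_paths_no_simple_vertex (k r : ℕ) (h1 : 1 ≤ r) (h2 : r ≤ k) :
    ({I : Fin k → ℕ | IsCanonical I ∧ (Finset.image I Finset.univ).card = r ∧
        ∀ v ∈ Finset.image I Finset.univ,
          2 ≤ (Finset.univ.filter fun l : Fin k => I l = v).card}.ncard : ℚ)
      = ((Nat.factorial k : ℚ) / (Nat.factorial r : ℚ)) *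
          ∑ f ∈ (Finset.Nat.antidiagonalTuple r k).filter fun f => ∀ i, 2 ≤ f i,
            ∏ i, (1 : ℚ) / (Nat.factorial (f i) : ℚ) :=
  card_canonical_paths_no_simple_vertex_general k r
end

section
/- The reduced Stirling numbers of the second kind satisfy B^d(k, r) = B(k-d+1, r-d+1) for k ≥ r ≥ d, where B^d(k,r) counts the partitions of {1,...,k} into r nonempty subsets such that any two elements in the same subset have distance at least d, and B is the Stirling number of the second kind. -/
/-- The Stirling number of the second kind `B(k,r)`. -/
noncomputable def stirlingB (k r : ℕ) : ℕ :=
  {P : Finpartition (Finset.univ : Finset (Fin k)) | P.parts.card = r}.ncard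

/-- The reduced Stirling number of the second kind `B^d(k,r)`: the number of partitions of
`{1,…,k}` into `r` nonempty blocks such that any two distinct elements of the same block
are at distance at least `d`. -/
noncomputable def stirlingBd (d k r : ℕ) : ℕ :=
  {P : Finpartition (Finset.univ : Finset (Fin k)) |
    P.parts.card = r ∧
    ∀ b ∈ P.parts, ∀ i ∈ b, ∀ j ∈ b, i ≠ j → d ≤ Nat.dist i.val j.val}.ncard

/-!
A partition of a finite linear order is determined by the map `p` sending each element to the
previous element of its block (`⊥` for the least element of a block). The maps that arise are
exactly those with `p j < j` that are injective away from `⊥`; the blocks are the chains of `p`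
and are counted by the fibre `p ⁻¹' {⊥}`. The separation condition of `B^d` says that every step
`j ↦ p j` has length at least `d`. On `Fin (e + n)` such a map with steps of length `≥ d + e`
sends the `e` least elements to `⊥`, and shortening every step by `e` is a bijection onto the maps
on `Fin n` with steps of length `≥ d`, removing `e` blocks. Taking `e = d - 1` turns `B^d(k, r)`
into `B^1(k - d + 1, r - d + 1)`, which is `B(k - d + 1, r - d + 1)`.
-/

open Finset Relation

section Chains

variable {α : Type*}

abbrev Descends (p : α → WithBot α) : α → α → Prop := ReflTransGen fun a b => p a = b

variable {p : α → WithBot α} {x y z : α}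

theorem Descends.le [Preorder α] (hp : ∀ j, p j < j) (h : Descends p x y) : y ≤ x := by
  induction h with
  | refl => exact le_rfl
  | tail _ hstep ih => exact (WithBot.coe_lt_coe.1 (hstep ▸ hp _)).le.trans ih

theorem Descends.total_of_source (hy : Descends p x y) (hz : Descends p x z) :
    Descends p y z ∨ Descends p z y :=
  ReflTransGen.total_of_right_unique (fun _ _ _ hb hc => WithBot.coe_injective (hb.symm.trans hc))
    hy hz

theorem Descends.total_of_target (hp : Relator.LeftUnique fun a b : α => p a = b)
    (hy : Descends p y x) (hz : Descends p z x) : Descends p y z ∨ Descends p z y := by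
  have hswap : Relator.RightUnique (Function.swap fun a b : α => p a = b) :=
    fun _ _ _ hb hc => hp hb hc
  exact ((ReflTransGen.total_of_right_unique hswap (reflTransGen_swap.2 hy)
    (reflTransGen_swap.2 hz)).imp reflTransGen_swap.1 reflTransGen_swap.1).symm

def chainSetoid (p : α → WithBot α) : Setoid α where
  r x y := ∃ z, Descends p x z ∧ Descends p y z
  iseqv :=
    { refl x := ⟨x, .refl, .refl⟩
      symm := fun ⟨z, hx, hy⟩ => ⟨z, hy, hx⟩
      trans := fun ⟨z, hx, hy⟩ ⟨w, hy', hw⟩ => by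
        rcases hy.total_of_source hy' with h | h
        · exact ⟨w, hx.trans h, hw⟩
        · exact ⟨z, hx, hw.trans h⟩ }

structure IsPredMap [Preorder α] (p : α → WithBot α) : Prop where
  lt : ∀ j, p j < j
  leftUnique : Relator.LeftUnique fun a b : α => p a = b

end Chains

namespace Finpartition

theorem ext_part {α : Type*} [DecidableEq α] {s : Finset α} {P Q : Finpartition s}
    (h : ∀ a, P.part a = Q.part a) : P = Q := by
  ext B
  constructor <;> intro hB
  · obtain ⟨a, ha⟩ := P.nonempty_of_mem_parts hB
    rw [← P.part_eq_of_mem hB ha, h]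
    exact Q.part_mem.2 (P.le hB ha)
  · obtain ⟨a, ha⟩ := Q.nonempty_of_mem_parts hB
    rw [← Q.part_eq_of_mem hB ha, ← h]
    exact P.part_mem.2 (Q.le hB ha)

variable {α : Type*} [Fintype α] [LinearOrder α]

section Prev

variable (P : Finpartition (univ : Finset α)) {i j x y : α}

def prev (j : α) : WithBot α := {i ∈ P.part j | i < j}.max

theorem mem_part_and_lt_of_prev_eq (h : P.prev j = i) : i ∈ P.part j ∧ i < j :=
  mem_filter.1 (mem_of_max h)

theorem le_prev (hi : i ∈ P.part j) (hij : i < j) : (i : WithBot α) ≤ P.prev j :=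
  le_max (mem_filter.2 ⟨hi, hij⟩)

theorem prev_eq_bot_iff : P.prev j = ⊥ ↔ ∀ i ∈ P.part j, j ≤ i := by
  simp [prev, Finset.max_eq_bot, filter_eq_empty_iff]

theorem part_eq_of_mem_part (h : i ∈ P.part j) : P.part i = P.part j :=
  (P.mem_part_iff_part_eq_part (mem_univ i) (mem_univ j)).1 h

theorem prev_leftUnique : Relator.LeftUnique fun a b : α => P.prev a = b := by
  intro j₁ j₂ i h₁ h₂
  obtain ⟨hi₁, hij₁⟩ := P.mem_part_and_lt_of_prev_eq h₁
  obtain ⟨hi₂, hij₂⟩ := P.mem_part_and_lt_of_prev_eq h₂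
  have hpart : P.part j₁ = P.part j₂ :=
    (P.part_eq_of_mem_part hi₁).symm.trans (P.part_eq_of_mem_part hi₂)
  by_contra hne
  rcases lt_or_gt_of_ne hne with hlt | hlt
  · have := h₂ ▸ P.le_prev (hpart ▸ P.mem_part (mem_univ j₁)) hlt
    exact (WithBot.coe_le_coe.1 this).not_gt hij₁
  · have := h₁ ▸ P.le_prev (hpart ▸ P.mem_part (mem_univ j₂)) hlt
    exact (WithBot.coe_le_coe.1 this).not_gt hij₂

theorem card_parts_eq_card_prev_eq_bot : #P.parts = #{j | P.prev j = ⊥} := by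
  refine (card_bij (fun j _ => P.part j) (fun j _ => P.part_mem.2 (mem_univ j)) ?_ ?_).symm
  · intro j₁ h₁ j₂ h₂ hpart
    simp only [mem_filter, mem_univ, true_and, prev_eq_bot_iff] at h₁ h₂
    exact le_antisymm (h₁ _ (hpart ▸ P.mem_part (mem_univ j₂)))
      (h₂ _ (hpart ▸ P.mem_part (mem_univ j₁)))
  · intro B hB
    have hmin := B.min'_mem (P.nonempty_of_mem_parts hB)
    refine ⟨_, ?_, P.part_eq_of_mem hB hmin⟩
    simp only [mem_filter, mem_univ, true_and, prev_eq_bot_iff, P.part_eq_of_mem hB hmin]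
    exact fun i hi => B.min'_le i hi

theorem part_eq_of_descends_prev (h : Descends P.prev x y) : P.part y = P.part x := by
  induction h with
  | refl => rfl
  | tail _ hstep ih => exact (P.part_eq_of_mem_part (P.mem_part_and_lt_of_prev_eq hstep).1).trans ih

theorem descends_prev_of_mem_part (hy : y ∈ P.part x) (hyx : y ≤ x) : Descends P.prev x y := by
  induction x using WellFoundedLT.induction with
  | _ x ih =>
    rcases hyx.eq_or_lt with rfl | hlt
    · exact .refl
    · obtain ⟨i, hprev, hyi⟩ := WithBot.coe_le_iff.1 (P.le_prev hy hlt)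
      obtain ⟨hi, hix⟩ := P.mem_part_and_lt_of_prev_eq hprev
      exact .head hprev (ih i hix (P.part_eq_of_mem_part hi ▸ hy) hyi)

end Prev

section OfPredMap

open Classical in
noncomputable def ofPredMap (p : α → WithBot α) : Finpartition (univ : Finset α) :=
  ofSetoid (chainSetoid p)

variable {p : α → WithBot α} {x y : α}

theorem mem_part_ofPredMap :
    y ∈ (ofPredMap p).part x ↔ ∃ z, Descends p x z ∧ Descends p y z := by
  classical
  exact mem_part_ofSetoid_iff_rel

theorem descends_of_mem_part_ofPredMap (hp : IsPredMap p) (hy : y ∈ (ofPredMap p).part x)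
    (hyx : y ≤ x) : Descends p x y := by
  obtain ⟨z, hxz, hyz⟩ := mem_part_ofPredMap.1 hy
  rcases hxz.total_of_target hp.leftUnique hyz with h | h
  · exact h
  · rw [le_antisymm hyx (h.le hp.lt)]

theorem prev_ofPredMap (hp : IsPredMap p) : (ofPredMap p).prev = p := by
  funext j
  apply le_antisymm
  · refine Finset.max_le fun l hl => ?_
    obtain ⟨hlj, hl⟩ := mem_filter.1 hl
    rcases ReflTransGen.cases_head (descends_of_mem_part_ofPredMap hp hlj hl.le) with
      rfl | ⟨c, hc, hcl⟩
    · exact absurd hl (lt_irrefl _)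
    · exact hc ▸ WithBot.coe_le_coe.2 (Descends.le hp.lt hcl)
  · cases h : p j using WithBot.recBotCoe with
    | bot => exact bot_le
    | coe i =>
      exact (ofPredMap p).le_prev (mem_part_ofPredMap.2 ⟨i, .single h, .refl⟩)
        (WithBot.coe_lt_coe.1 (h ▸ hp.lt j))

theorem ofPredMap_prev (P : Finpartition (univ : Finset α)) : ofPredMap P.prev = P := by
  refine ext_part fun x => Finset.ext fun y => ?_
  rw [mem_part_ofPredMap]
  constructor
  · rintro ⟨z, hxz, hyz⟩
    rw [← P.part_eq_of_descends_prev hxz, P.part_eq_of_descends_prev hyz]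
    exact P.mem_part (mem_univ y)
  · intro hy
    rcases le_total y x with hyx | hxy
    · exact ⟨y, P.descends_prev_of_mem_part hy hyx, .refl⟩
    · have hx : x ∈ P.part y := P.part_eq_of_mem_part hy ▸ P.mem_part (mem_univ x)
      exact ⟨x, .refl, P.descends_prev_of_mem_part hx hxy⟩

theorem prev_injective :
    Function.Injective (prev : Finpartition (univ : Finset α) → α → WithBot α) :=
  Function.LeftInverse.injective ofPredMap_prev

end OfPredMap

end Finpartition

section Gaps

variable {n d r : ℕ}

theorem Finpartition.sep_iff_prev (P : Finpartition (univ : Finset (Fin n))) :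
    (∀ b ∈ P.parts, ∀ i ∈ b, ∀ j ∈ b, i ≠ j → d ≤ Nat.dist i.val j.val) ↔
      ∀ (j i : Fin n), P.prev j = i → i.val + d ≤ j.val := by
  constructor
  · intro hsep j i h
    obtain ⟨hi, hij⟩ := P.mem_part_and_lt_of_prev_eq h
    have := hsep _ (P.part_mem.2 (mem_univ j)) i hi j (P.mem_part (mem_univ j)) hij.ne
    rw [Nat.dist_eq_sub_of_le hij.le] at this
    omega
  · intro hgap b hb i hi j hj hne
    wlog hij : i < j generalizing i j
    · rw [Nat.dist_comm]
      exact this j hj i hi hne.symm (hne.lt_or_gt.resolve_left hij)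
    -- the previous element `i'` of `j` lies between `i` and `j`
    obtain ⟨i', hprev, hii'⟩ :=
      WithBot.coe_le_iff.1 (P.le_prev (P.part_eq_of_mem hb hj ▸ hi) hij)
    have := hgap j i' hprev
    rw [Fin.le_def] at hii'
    rw [Nat.dist_eq_sub_of_le hij.le]
    omega

def gapPredMaps (d n r : ℕ) : Set (Fin n → WithBot (Fin n)) :=
  {p | (∀ (j i : Fin n), p j = i → i.val + d ≤ j.val) ∧
    Relator.LeftUnique (fun a b : Fin n => p a = b) ∧ #{j | p j = ⊥} = r}

theorem isPredMap_of_mem_gapPredMaps (hd : 1 ≤ d) {p : Fin n → WithBot (Fin n)}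
    (hp : p ∈ gapPredMaps d n r) : IsPredMap p where
  lt j := by
    cases h : p j using WithBot.recBotCoe with
    | bot => exact WithBot.bot_lt_coe j
    | coe i => exact WithBot.coe_lt_coe.2 (Fin.lt_def.2 (by have := hp.1 j i h; omega))
  leftUnique := hp.2.1

theorem stirlingBd_eq_ncard_gapPredMaps (hd : 1 ≤ d) :
    stirlingBd d n r = (gapPredMaps d n r).ncard := by
  have himage : Finpartition.prev '' {P : Finpartition (univ : Finset (Fin n)) |
      #P.parts = r ∧ ∀ b ∈ P.parts, ∀ i ∈ b, ∀ j ∈ b, i ≠ j → d ≤ Nat.dist i.val j.val} =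
      gapPredMaps d n r := by
    ext p
    constructor
    · rintro ⟨P, ⟨hcard, hsep⟩, rfl⟩
      exact ⟨P.sep_iff_prev.1 hsep, P.prev_leftUnique, P.card_parts_eq_card_prev_eq_bot ▸ hcard⟩
    · intro hp
      have hprev := Finpartition.prev_ofPredMap (isPredMap_of_mem_gapPredMaps hd hp)
      refine ⟨Finpartition.ofPredMap p, ⟨?_, ?_⟩, hprev⟩
      · rw [Finpartition.card_parts_eq_card_prev_eq_bot, hprev, hp.2.2]
      · rw [Finpartition.sep_iff_prev, hprev]
        exact hp.1
  rw [stirlingBd, ← himage, Set.ncard_image_of_injective _ Finpartition.prev_injective]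

theorem stirlingB_eq_stirlingBd_one (m s : ℕ) : stirlingB m s = stirlingBd 1 m s := by
  unfold stirlingB stirlingBd
  congr 1
  ext P
  exact ⟨fun h => ⟨h, fun _ _ _ _ _ _ hij => Nat.dist_pos_of_ne (Fin.val_ne_of_ne hij)⟩,
    And.left⟩

end Gaps

section Lengthen

variable {n d r : ℕ}

/-- Prepend `e` elements mapped to `⊥` and keep the values of `p`, so that every step of `p`
becomes `e` longer. -/
def lengthen (e : ℕ) (p : Fin n → WithBot (Fin n)) : Fin (e + n) → WithBot (Fin (e + n)) :=
  Fin.addCases (fun _ => ⊥) fun j => (p j).map (Fin.castLE (Nat.le_add_left n e))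

variable {e : ℕ} {p : Fin n → WithBot (Fin n)}

@[simp]
theorem lengthen_castAdd (i : Fin e) : lengthen e p (Fin.castAdd n i) = ⊥ := by
  simp [lengthen]

@[simp]
theorem lengthen_natAdd (j : Fin n) :
    lengthen e p (Fin.natAdd e j) = (p j).map (Fin.castLE (Nat.le_add_left n e)) := by
  simp [lengthen]

theorem lengthen_injective :
    Function.Injective (lengthen e : (Fin n → WithBot (Fin n)) → _) := by
  intro p q h
  funext j
  have := congrFun h (Fin.natAdd e j)
  simp only [lengthen_natAdd] at this
  exact WithBot.map_injective (Fin.castLE_injective _) this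

theorem lengthen_gap_iff :
    (∀ (j i : Fin (e + n)), lengthen e p j = i → i.val + (d + e) ≤ j.val) ↔
      ∀ (j i : Fin n), p j = i → i.val + d ≤ j.val := by
  rw [Fin.forall_fin_add]
  simp only [lengthen_castAdd, lengthen_natAdd, WithBot.bot_ne_coe, false_implies, implies_true,
    true_and]
  refine forall_congr' fun j => ?_
  cases p j using WithBot.recBotCoe with
  | bot => simp
  | coe c =>
    simp only [WithBot.map_coe, WithBot.coe_inj, forall_eq', Fin.val_castLE, Fin.val_natAdd]
    omega

theorem leftUnique_lengthen_iff :
    Relator.LeftUnique (fun a b : Fin (e + n) => lengthen e p a = b) ↔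
      Relator.LeftUnique (fun a b : Fin n => p a = b) := by
  have hcast : Function.Injective (Fin.castLE (Nat.le_add_left n e)) := Fin.castLE_injective _
  constructor
  · intro h a b c ha hb
    exact (Fin.natAdd_inj e).1 <| @h (Fin.natAdd e a) (Fin.natAdd e b)
      (Fin.castLE (Nat.le_add_left n e) c) (by simp [ha]) (by simp [hb])
  · intro h a b c ha hb
    induction a using Fin.addCases with
    | left => simp at ha
    | right a =>
      induction b using Fin.addCases with
      | left => simp at hb
      | right b =>
        simp only [lengthen_natAdd, WithBot.map_eq_some_iff] at ha hb
        obtain ⟨x, hx, rfl⟩ := ha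
        obtain ⟨y, hy, hxy⟩ := hb
        rw [hcast hxy] at hy
        rw [h hx hy]

theorem card_lengthen_eq_bot : #{j | lengthen e p j = ⊥} = #{j | p j = ⊥} + e := by
  rw [card_filter, card_filter, Fin.sum_univ_add]
  simp [add_comm]

theorem lengthen_mem_gapPredMaps_iff :
    lengthen e p ∈ gapPredMaps (d + e) (e + n) (r + e) ↔ p ∈ gapPredMaps d n r := by
  simp only [gapPredMaps, Set.mem_ofPred_eq, lengthen_gap_iff, leftUnique_lengthen_iff,
    card_lengthen_eq_bot, add_left_inj]

theorem exists_lengthen_eq {q : Fin (e + n) → WithBot (Fin (e + n))}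
    (hq : ∀ (j i : Fin (e + n)), q j = i → i.val + e ≤ j.val) : ∃ p, lengthen e p = q := by
  have hlift : ∀ j : Fin n, ∃ o : WithBot (Fin n),
      o.map (Fin.castLE (Nat.le_add_left n e)) = q (Fin.natAdd e j) := by
    intro j
    cases h : q (Fin.natAdd e j) using WithBot.recBotCoe with
    | bot => exact ⟨⊥, rfl⟩
    | coe i =>
      have := hq _ i h
      simp only [Fin.natAdd] at this
      exact ⟨(⟨i, by omega⟩ : Fin n), rfl⟩
  choose p hp using hlift
  refine ⟨p, funext fun j => Fin.addCases (fun i => ?_) (fun j => ?_) j⟩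
  · rw [lengthen_castAdd]
    cases h : q (Fin.castAdd n i) using WithBot.recBotCoe with
    | bot => rfl
    | coe c =>
      have := hq _ c h
      simp only [Fin.castAdd, Fin.castLE] at this
      omega
  · rw [lengthen_natAdd, hp]

theorem ncard_gapPredMaps_add :
    (gapPredMaps (d + e) (e + n) (r + e)).ncard = (gapPredMaps d n r).ncard := by
  have himage : lengthen e '' gapPredMaps d n r = gapPredMaps (d + e) (e + n) (r + e) := by
    ext q
    constructor
    · rintro ⟨p, hp, rfl⟩
      exact lengthen_mem_gapPredMaps_iff.2 hp
    · intro hq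
      obtain ⟨p, rfl⟩ := exists_lengthen_eq fun j i h => by have := hq.1 j i h; omega
      exact ⟨p, lengthen_mem_gapPredMaps_iff.1 hq, rfl⟩
  rw [← himage, Set.ncard_image_of_injective _ lengthen_injective]

end Lengthen

theorem reduced_stirling (d k r : ℕ) (hd : 1 ≤ d) (hr : d ≤ r) (hk : r ≤ k) :
    stirlingBd d k r = stirlingB (k - d + 1) (r - d + 1) := by
  obtain ⟨e, rfl⟩ : ∃ e, d = 1 + e := ⟨d - 1, by omega⟩
  obtain ⟨m, rfl⟩ : ∃ m, k = e + m := ⟨k - e, by omega⟩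
  obtain ⟨s, rfl⟩ : ∃ s, r = s + e := ⟨r - e, by omega⟩
  rw [show e + m - (1 + e) + 1 = m by omega, show s + e - (1 + e) + 1 = s by omega,
    stirlingB_eq_stirlingBd_one, stirlingBd_eq_ncard_gapPredMaps hd,
    stirlingBd_eq_ncard_gapPredMaps le_rfl, ncard_gapPredMaps_add]
end

section
/- For a bipartite multigraph Δ(I,T) associated to paths I (of length k, with vertices among {1,...,p}) and T (of length k, with vertices among {1,...,n}), if every edge of Δ(I,T) has multiplicity at least 2, then the number of distinct values in T satisfies #{T} ≤ k - r + 1, where r is the number of distinct values in I. -/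
/-!
The `2k` edges of `Δ(I,T)` all have multiplicity at least 2, so there are at most `k` distinct
ones. The zigzag `(i₁,t₁), (i₂,t₁), (i₂,t₂), (i₃,t₂), …` runs through all of them as a walk
(consecutive edges share an endpoint), and a walk through `e` distinct edges meets at most
`e + 1` distinct vertices. Hence `r + #{T} ≤ k + 1`.
-/

open Finset

theorem Multiset.two_mul_card_toFinset_le_card {α : Type*} [DecidableEq α] {E : Multiset α}
    (hE : ∀ e ∈ E, 2 ≤ E.count e) : 2 * #E.toFinset ≤ Multiset.card E := by
  rw [← Multiset.toFinset_sum_count_eq, mul_comm, ← smul_eq_mul]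
  exact Finset.card_nsmul_le_sum _ _ _ fun e he => hE e (Multiset.mem_toFinset.1 he)

section Walk

variable {α β : Type*}

theorem List.card_toFinset_map_fst_add_card_toFinset_map_snd_le [DecidableEq α] [DecidableEq β]
    {L : List (α × β)} (hL : L.IsChain fun a b => a.1 = b.1 ∨ a.2 = b.2) :
    #(L.map Prod.fst).toFinset + #(L.map Prod.snd).toFinset ≤ #L.toFinset + 1 := by
  induction L with
  | nil => simp
  | cons a l ih =>
    simp only [List.map_cons, List.toFinset_cons]
    rcases l with _ | ⟨b, t⟩
    · simp
    have ih := ih hL.tail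
    by_cases ha : a ∈ b :: t
    · rwa [insert_eq_of_mem (List.mem_toFinset.2 ha),
        insert_eq_of_mem (List.mem_toFinset.2 (List.mem_map_of_mem ha)),
        insert_eq_of_mem (List.mem_toFinset.2 (List.mem_map_of_mem ha))]
    have hnew : #(insert a (b :: t).toFinset) = #(b :: t).toFinset + 1 :=
      card_insert_of_notMem (mt List.mem_toFinset.1 ha)
    have hb : b ∈ b :: t := List.mem_cons_self
    rcases (List.isChain_cons_cons.1 hL).1 with h | h
    · rw [insert_eq_of_mem (List.mem_toFinset.2 (List.mem_map.2 ⟨b, hb, h.symm⟩))]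
      have := card_insert_le a.2 ((b :: t).map Prod.snd).toFinset
      omega
    · rw [insert_eq_of_mem (List.mem_toFinset.2 (List.mem_map.2 ⟨b, hb, h.symm⟩))]
      have := card_insert_le a.1 ((b :: t).map Prod.fst).toFinset
      omega

/-- The `n`-th edge of the walk `(i 0, t 0), (i 1, t 0), (i 1, t 1), (i 2, t 1), …`. -/
def zigzag (i : ℕ → α) (t : ℕ → β) (n : ℕ) : α × β := (i ((n + 1) / 2), t (n / 2))

@[simp]
theorem zigzag_two_mul (i : ℕ → α) (t : ℕ → β) (ℓ : ℕ) :
    zigzag i t (2 * ℓ) = (i ℓ, t ℓ) := by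
  simp only [zigzag]; congr 2 <;> omega

@[simp]
theorem zigzag_two_mul_add_one (i : ℕ → α) (t : ℕ → β) (ℓ : ℕ) :
    zigzag i t (2 * ℓ + 1) = (i (ℓ + 1), t ℓ) := by
  simp only [zigzag]; congr 2 <;> omega

theorem isChain_map_zigzag (i : ℕ → α) (t : ℕ → β) (m : ℕ) :
    ((List.range m).map (zigzag i t)).IsChain fun a b => a.1 = b.1 ∨ a.2 = b.2 := by
  refine (List.isChain_map _).2 <| (List.isChain_range _ _).2 fun n _ => ?_
  rcases Nat.even_or_odd n with ⟨ℓ, rfl⟩ | ⟨ℓ, rfl⟩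
  · right; simp only [zigzag]; congr 1; omega
  · left; simp only [zigzag]; congr 1; omega

end Walk

/-- If every edge of the bipartite multigraph `Δ(I,T)` (with edges `(i_ℓ, t_ℓ)` and
`(i_{ℓ+1}, t_ℓ)` for `ℓ = 1,…,k`, cyclically) has multiplicity at least 2, then the number
of distinct values of `T` is at most `k - r + 1`, where `r` is the number of distinct
values of `I`. -/
theorem card_T_le (k : ℕ) (hk : 0 < k) (I T : Fin k → ℕ)
    (E : Multiset (ℕ × ℕ))
    (hE : E = (Finset.univ.val.map fun ℓ : Fin k => (I ℓ, T ℓ)) +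
              (Finset.univ.val.map fun ℓ : Fin k =>
                (I ⟨(ℓ.val + 1) % k, Nat.mod_lt _ hk⟩, T ℓ)))
    (hmult : ∀ e ∈ E, 2 ≤ E.count e) :
    (Finset.image T Finset.univ).card ≤ k - (Finset.image I Finset.univ).card + 1 := by
  -- Indices are read mod `k`, so the last edge `(i k, t (k - 1))` of the walk is in `E`.
  let i : ℕ → ℕ := fun n => I ⟨n % k, Nat.mod_lt n hk⟩
  let t : ℕ → ℕ := fun n => T ⟨n % k, Nat.mod_lt n hk⟩
  let L := (List.range (2 * k)).map (zigzag i t)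
  have hwalk : #(L.map Prod.fst).toFinset + #(L.map Prod.snd).toFinset ≤ #L.toFinset + 1 :=
    List.card_toFinset_map_fst_add_card_toFinset_map_snd_le (isChain_map_zigzag i t (2 * k))
  have hIL : image I univ ⊆ (L.map Prod.fst).toFinset := by
    intro _ hx
    obtain ⟨ℓ, -, rfl⟩ := mem_image.1 hx
    simp only [L, List.map_map, List.mem_toFinset, List.mem_map, List.mem_range]
    exact ⟨2 * ℓ, by omega, by simp [i, Nat.mod_eq_of_lt ℓ.isLt]⟩
  have hTL : image T univ ⊆ (L.map Prod.snd).toFinset := by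
    intro _ hx
    obtain ⟨ℓ, -, rfl⟩ := mem_image.1 hx
    simp only [L, List.map_map, List.mem_toFinset, List.mem_map, List.mem_range]
    exact ⟨2 * ℓ, by omega, by simp [t, Nat.mod_eq_of_lt ℓ.isLt]⟩
  have hLE : L.toFinset ⊆ E.toFinset := by
    simp only [L, subset_iff, List.mem_toFinset, List.mem_map, List.mem_range]
    rintro _ ⟨n, hn, rfl⟩
    rw [Multiset.mem_toFinset, hE, Multiset.mem_add]
    obtain ⟨ℓ, rfl | rfl⟩ := Nat.even_or_odd' n
    · refine .inl (Multiset.mem_map.2 ⟨⟨ℓ, by omega⟩, mem_univ_val _, ?_⟩)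
      simp [i, t, Nat.mod_eq_of_lt (show ℓ < k by omega)]
    · refine .inr (Multiset.mem_map.2 ⟨⟨ℓ, by omega⟩, mem_univ_val _, ?_⟩)
      simp [i, t, Nat.mod_eq_of_lt (show ℓ < k by omega)]
  have hedges : 2 * #E.toFinset ≤ 2 * k := by
    simpa [hE, two_mul] using Multiset.two_mul_card_toFinset_le_card hmult
  have hI := card_le_card hIL
  have hT := card_le_card hTL
  have hL := card_le_card hLE
  omega
end

section
/- The moments of the Marčenko–Pastur law with parameter γ > 0 are given by β_k(γ) = Σ_{r=1}^{k} (1/r) C(k, r-1) C(k-1, r-1) γ^{r-1} for every k ≥ 1. -/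
open MeasureTheory

/-- The Marčenko–Pastur law with parameter `γ > 0`: density
`sqrt((b_γ - x)(x - a_γ)) / (2πγx)` on `[a_γ, b_γ]` with `a_γ = (1-√γ)²`,
`b_γ = (1+√γ)²`, plus a point mass `1 - 1/γ` at `0` when `γ > 1`. -/
noncomputable def mpLaw (γ : ℝ) : Measure ℝ :=
  (volume.withDensity fun x =>
    ENNReal.ofReal
      (if (1 - Real.sqrt γ) ^ 2 ≤ x ∧ x ≤ (1 + Real.sqrt γ) ^ 2 then
        Real.sqrt (((1 + Real.sqrt γ) ^ 2 - x) * (x - (1 - Real.sqrt γ) ^ 2)) /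
          (2 * Real.pi * γ * x)
      else 0)) +
  ENNReal.ofReal (1 - 1 / γ) • Measure.dirac 0

/-!
On its support the density is a semicircle density with centre `1 + γ` and radius `2√γ`, and
the atom at `0` is invisible to `x ^ k` for `k ≥ 1`. Substituting `x = 1 + γ + 2√γ t` and
expanding binomially reduces the moments to those of the semicircle,
`∫ t ^ (2j) √(1 - t²) = π/2 · Cat_j / 4^j` (via `t = sin θ` and the Wallis recursion), the odd
ones vanishing. This gives `β_{m+1}(γ) = ∑_j C(m, 2j) Cat_j γ^j (1 + γ)^(m-2j)`. Expanding
`(1 + γ)^(m-2j)`, the coefficient of `γ^r` is the Narayana number `C(m+1, r) C(m, r) / (r+1)`,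
by the multinomial identity `C(m, 2j) C(2j, j) C(m-2j, r-j) = C(m, r) C(r, j) C(m-r, j)` and
Vandermonde's convolution.
-/

open Finset Real intervalIntegral

theorem Nat.choose_two_mul_mul_centralBinom_mul_choose {m r j : ℕ} (hjr : j ≤ r) :
    m.choose (2 * j) * j.centralBinom * (m - 2 * j).choose (r - j)
      = m.choose r * r.choose j * (m - r).choose j := by
  have hj : m.choose (2 * j) * j.centralBinom = m.choose j * (m - j).choose j := by
    rw [Nat.centralBinom_eq_two_mul_choose, Nat.choose_mul (by omega), two_mul,
      Nat.add_sub_cancel]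
  have hr : (m - j).choose r * r.choose j = (m - j).choose j * (m - 2 * j).choose (r - j) := by
    rw [Nat.choose_mul hjr, Nat.sub_sub, ← two_mul]
  have hjr' : m.choose j * (m - j).choose r = m.choose r * (m - r).choose j := by
    have hj' := Nat.choose_mul (n := m) (k := r + j) (Nat.le_add_left j r)
    have hr' := Nat.choose_mul (n := m) (k := r + j) (Nat.le_add_right r j)
    rw [Nat.add_sub_cancel] at hj'
    rw [Nat.add_sub_cancel_left, Nat.choose_symm_add] at hr'
    rw [← hj', hr']
  calc m.choose (2 * j) * j.centralBinom * (m - 2 * j).choose (r - j)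
      = m.choose j * ((m - j).choose r * r.choose j) := by rw [hj, hr, mul_assoc]
    _ = m.choose r * r.choose j * (m - r).choose j := by rw [← mul_assoc, hjr']; ring

theorem Nat.sum_range_choose_succ_mul_choose_sub {m r : ℕ} (hrm : r ≤ m) :
    ∑ j ∈ range (r + 1), (r + 1).choose (j + 1) * (m - r).choose j = (m + 1).choose r := by
  rw [show m + 1 = (r + 1) + (m - r) by omega, Nat.add_choose_eq,
    Nat.sum_antidiagonal_eq_sum_range_succ (fun i j => (r + 1).choose i * (m - r).choose j),
    ← sum_range_reflect]
  refine sum_congr rfl fun j hj => ?_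
  rw [mem_range] at hj
  rw [show r + 1 - 1 - j = r - j by omega,
    Nat.choose_symm_of_eq_add (show r + 1 = r - j + 1 + j by omega)]

theorem Nat.succ_mul_sum_choose_two_mul_mul_catalan_mul_choose {m r : ℕ} (hrm : r ≤ m) :
    (r + 1) * ∑ j ∈ range (r + 1), m.choose (2 * j) * catalan j * (m - 2 * j).choose (r - j)
      = (m + 1).choose r * m.choose r := by
  have hterm : ∀ j ∈ range (r + 1),
      (r + 1) * (m.choose (2 * j) * catalan j * (m - 2 * j).choose (r - j))
        = m.choose r * ((r + 1).choose (j + 1) * (m - r).choose j) := by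
    intro j hj
    apply Nat.eq_of_mul_eq_mul_left j.succ_pos
    calc (j + 1) * ((r + 1) * (m.choose (2 * j) * catalan j * (m - 2 * j).choose (r - j)))
        = (r + 1) * (m.choose (2 * j) * ((j + 1) * catalan j) * (m - 2 * j).choose (r - j)) := by
          ring
      _ = (r + 1) * (m.choose r * r.choose j * (m - r).choose j) := by
          rw [succ_mul_catalan_eq_centralBinom,
            Nat.choose_two_mul_mul_centralBinom_mul_choose (Nat.lt_succ_iff.mp (mem_range.mp hj))]
      _ = (j + 1) * (m.choose r * ((r + 1).choose (j + 1) * (m - r).choose j)) := by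
          rw [← mul_assoc (r + 1), mul_left_comm (r + 1), Nat.add_one_mul_choose_eq]; ring
  rw [mul_sum, sum_congr rfl hterm, ← mul_sum,
    Nat.sum_range_choose_succ_mul_choose_sub hrm, mul_comm]

theorem sum_choose_two_mul_mul_catalan_mul_pow_mul_one_add_pow {R : Type*} [CommSemiring R]
    (m : ℕ) (x : R) :
    ∑ j ∈ range (m + 1), (m.choose (2 * j) * catalan j : R) * x ^ j * (1 + x) ^ (m - 2 * j)
      = ∑ r ∈ range (m + 1),
          ((∑ j ∈ range (r + 1),
              m.choose (2 * j) * catalan j * (m - 2 * j).choose (r - j) : ℕ) : R)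
            * x ^ r := by
  have hbinom : ∀ j ∈ range (m + 1),
      (m.choose (2 * j) * catalan j : R) * x ^ j * (1 + x) ^ (m - 2 * j)
        = ∑ s ∈ range (m + 1 - j),
            (m.choose (2 * j) * catalan j * (m - 2 * j).choose s : R) * x ^ (j + s) := by
    intro j hj
    rcases Nat.lt_or_ge m (2 * j) with hmj | hjm
    · simp [Nat.choose_eq_zero_of_lt hmj]
    rw [show m + 1 - j = (m - 2 * j + 1) + j by omega, sum_range_add,
      sum_eq_zero (s := range j) fun s _ => by
        rw [Nat.choose_eq_zero_of_lt (by omega : m - 2 * j < m - 2 * j + 1 + s)]; simp,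
      add_zero, add_comm 1 x, add_pow, mul_sum]
    exact sum_congr rfl fun s _ => by rw [pow_add]; ring
  rw [sum_congr rfl hbinom, ← sum_range_diag_flip]
  refine sum_congr rfl fun r _ => ?_
  push_cast
  rw [sum_mul]
  refine sum_congr rfl fun j hj => ?_
  rw [Nat.add_sub_cancel' (Nat.lt_succ_iff.mp (mem_range.mp hj))]


theorem integral_sin_pow_succ_succ_symm (i : ℕ) :
    ∫ θ in -(π / 2)..π / 2, sin θ ^ (i + 2)
      = (i + 1) / (i + 2) * ∫ θ in -(π / 2)..π / 2, sin θ ^ i := by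
  simp [integral_sin_pow]

theorem integral_sin_pow_two_mul_symm (j : ℕ) :
    ∫ θ in -(π / 2)..π / 2, sin θ ^ (2 * j) = π * j.centralBinom / 4 ^ j := by
  induction j with
  | zero => simp
  | succ j ih =>
    have hcb : ((j : ℝ) + 1) * (j + 1).centralBinom = 2 * (2 * j + 1) * j.centralBinom := by
      exact_mod_cast Nat.succ_mul_centralBinom_succ j
    rw [show 2 * (j + 1) = 2 * j + 2 by ring, integral_sin_pow_succ_succ_symm, ih]
    push_cast
    rw [pow_succ]
    field_simp
    linear_combination -2 * hcb

theorem integral_sin_pow_two_mul_add_one_symm (j : ℕ) :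
    ∫ θ in -(π / 2)..π / 2, sin θ ^ (2 * j + 1) = 0 := by
  induction j with
  | zero => simp [integral_sin]
  | succ j ih => rw [show 2 * (j + 1) + 1 = 2 * j + 1 + 2 by ring,
      integral_sin_pow_succ_succ_symm, ih, mul_zero]

theorem integral_pow_mul_sqrt_one_sub_sq (i : ℕ) :
    ∫ t in (-1 : ℝ)..1, t ^ i * √(1 - t ^ 2)
      = (∫ θ in -(π / 2)..π / 2, sin θ ^ i) / (i + 2) := by
  -- substitute `t = sin θ`, so that `√(1 - t²) dt = cos² θ dθ = (1 - sin² θ) dθ`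
  have hsubst := integral_comp_mul_deriv (a := -(π / 2)) (b := π / 2)
    (fun θ _ => hasDerivAt_sin θ) continuous_cos.continuousOn
    (g := fun t => t ^ i * √(1 - t ^ 2)) (by fun_prop)
  simp only [Function.comp_def, sin_neg, sin_pi_div_two] at hsubst
  have hcos : ∀ θ ∈ Set.uIcc (-(π / 2)) (π / 2),
      sin θ ^ i * √(1 - sin θ ^ 2) * cos θ = sin θ ^ i - sin θ ^ (i + 2) := by
    intro θ hθ
    rw [Set.uIcc_of_le (by linarith [pi_pos])] at hθ
    rw [← cos_sq', sqrt_sq (cos_nonneg_of_mem_Icc hθ)]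
    linear_combination sin θ ^ i * sin_sq_add_cos_sq θ
  rw [← hsubst, integral_congr hcos, integral_sub
    ((by fun_prop : Continuous fun θ => sin θ ^ i).intervalIntegrable _ _)
    ((by fun_prop : Continuous fun θ => sin θ ^ (i + 2)).intervalIntegrable _ _),
    integral_sin_pow_succ_succ_symm]
  field_simp
  ring

theorem integral_pow_two_mul_mul_sqrt_one_sub_sq (j : ℕ) :
    ∫ t in (-1 : ℝ)..1, t ^ (2 * j) * √(1 - t ^ 2) = π / 2 * catalan j / 4 ^ j := by
  rw [integral_pow_mul_sqrt_one_sub_sq, integral_sin_pow_two_mul_symm,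
    ← succ_mul_catalan_eq_centralBinom]
  push_cast
  field_simp

theorem integral_pow_two_mul_add_one_mul_sqrt_one_sub_sq (j : ℕ) :
    ∫ t in (-1 : ℝ)..1, t ^ (2 * j + 1) * √(1 - t ^ 2) = 0 := by
  rw [integral_pow_mul_sqrt_one_sub_sq, integral_sin_pow_two_mul_add_one_symm, zero_div]

theorem Finset.sum_range_two_mul_of_odd_eq_zero {M : Type*} [AddCommMonoid M] {f : ℕ → M}
    (hf : ∀ j, f (2 * j + 1) = 0) (n : ℕ) :
    ∑ i ∈ range (2 * n), f i = ∑ j ∈ range n, f (2 * j) := by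
  induction n with
  | zero => simp
  | succ n ih => rw [mul_add, mul_one, sum_range_succ, sum_range_succ, hf, add_zero,
      sum_range_succ, ih]

theorem integral_pow_mul_sqrt_sub_mul_sub {c d : ℝ} (hd : 0 ≤ d) (m : ℕ) :
    ∫ x in c - d..c + d, x ^ m * √((c + d - x) * (x - (c - d)))
      = π / 2 * d ^ 2 * ∑ j ∈ range (m + 1),
          (m.choose (2 * j) * catalan j : ℝ) * (d ^ 2 / 4) ^ j * c ^ (m - 2 * j) := by
  have hexpand : ∀ t : ℝ, (d * t + c) ^ m * √((c + d - (d * t + c)) * (d * t + c - (c - d)))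
      = ∑ i ∈ range (m + 1),
          m.choose i * d ^ (i + 1) * c ^ (m - i) * (t ^ i * √(1 - t ^ 2)) := by
    intro t
    rw [show (c + d - (d * t + c)) * (d * t + c - (c - d)) = d ^ 2 * (1 - t ^ 2) by ring,
      sqrt_mul (sq_nonneg d), sqrt_sq hd, add_pow, sum_mul]
    exact sum_congr rfl fun i _ => by ring
  have hsub := smul_integral_comp_mul_add (a := -1) (b := 1)
    (f := fun x => x ^ m * √((c + d - x) * (x - (c - d)))) d c
  rw [show d * -1 + c = c - d by ring, show d * 1 + c = c + d by ring] at hsub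
  have hmoment : ∀ i, (∫ t in (-1 : ℝ)..1, m.choose i * d ^ (i + 1) * c ^ (m - i) *
      (t ^ i * √(1 - t ^ 2))) = m.choose i * d ^ (i + 1) * c ^ (m - i) *
      ∫ t in (-1 : ℝ)..1, t ^ i * √(1 - t ^ 2) := fun i => integral_const_mul _ _
  rw [← hsub, smul_eq_mul, integral_congr fun t _ => hexpand t,
    integral_finsetSum fun i _ => Continuous.intervalIntegrable (by fun_prop) _ _, mul_sum]
  simp only [hmoment]
  rw [sum_subset (range_subset_range.mpr (by omega : m + 1 ≤ 2 * (m + 1))) fun i _ hi => by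
      rw [Nat.choose_eq_zero_of_lt (by simp at hi; omega)]; simp,
    sum_range_two_mul_of_odd_eq_zero fun j => by
      rw [integral_pow_two_mul_add_one_mul_sqrt_one_sub_sq]; simp, mul_sum]
  refine sum_congr rfl fun j _ => ?_
  rw [integral_pow_two_mul_mul_sqrt_one_sub_sq, div_pow, ← pow_mul]
  field_simp
  ring

theorem integral_pow_succ_mpLaw {γ : ℝ} (hγ : 0 ≤ γ) (n : ℕ) :
    ∫ x, x ^ (n + 1) ∂mpLaw γ
      = (∫ x in (1 - √γ) ^ 2..(1 + √γ) ^ 2,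
          x ^ n * √(((1 + √γ) ^ 2 - x) * (x - (1 - √γ) ^ 2))) / (2 * π * γ) := by
  rw [mpLaw]
  set a := (1 - √γ) ^ 2
  set b := (1 + √γ) ^ 2
  set ρ : ℝ → ℝ := fun x =>
    if a ≤ x ∧ x ≤ b then √((b - x) * (x - a)) / (2 * π * γ * x) else 0
  set ψ : ℝ → ℝ := fun x => x ^ n * √((b - x) * (x - a)) / (2 * π * γ)
  have hab : a ≤ b := by nlinarith [sqrt_nonneg γ]
  have hρ : Measurable fun x => ENNReal.ofReal (ρ x) :=
    (Measurable.ite measurableSet_Icc (by fun_prop) (by fun_prop)).ennreal_ofReal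
  -- at `x = 0 ∈ [a, b]` we have `a = 0`, so both sides vanish
  have hdensity : ∀ x,
      (ENNReal.ofReal (ρ x)).toReal • x ^ (n + 1) = (Set.Icc a b).indicator ψ x := by
    intro x
    by_cases hx : x ∈ Set.Icc a b
    · have hx0 : 0 ≤ x := (sq_nonneg _).trans hx.1
      rw [Set.indicator_of_mem hx,
        ENNReal.toReal_ofReal (by simp only [ρ]; split_ifs <;> positivity)]
      simp only [ρ, ψ, smul_eq_mul]
      rw [if_pos (show a ≤ x ∧ x ≤ b from hx)]
      rcases hx0.eq_or_lt with rfl | hx0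
      · simp [le_antisymm hx.1 (sq_nonneg _)]
      · field_simp
        ring
    · rw [Set.indicator_of_notMem hx]
      simp [ρ, show ¬(a ≤ x ∧ x ≤ b) from hx]
  have hdirac :
      Integrable (fun x : ℝ => x ^ (n + 1)) (ENNReal.ofReal (1 - 1 / γ) • Measure.dirac 0) :=
    (integrable_dirac (by simp)).smul_measure ENNReal.ofReal_ne_top
  rw [integral_add_measure ?_ hdirac, MeasureTheory.integral_smul_measure, integral_dirac,
    integral_withDensity_eq_integral_toReal_smul hρ (by simp), funext hdensity,
    MeasureTheory.integral_indicator measurableSet_Icc, integral_Icc_eq_integral_Ioc,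
    ← integral_of_le hab, intervalIntegral.integral_div]
  · simp
  · rw [integrable_withDensity_iff_integrable_smul' hρ (by simp), funext hdensity]
    exact (by fun_prop : Continuous ψ).integrableOn_Icc.integrable_indicator measurableSet_Icc

theorem integral_pow_succ_mpLaw_eq_sum_catalan {γ : ℝ} (hγ : 0 < γ) (m : ℕ) :
    ∫ x, x ^ (m + 1) ∂mpLaw γ
      = ∑ j ∈ range (m + 1),
          (m.choose (2 * j) * catalan j : ℝ) * γ ^ j * (1 + γ) ^ (m - 2 * j) := by
  have hs : √γ ^ 2 = γ := sq_sqrt hγ.le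
  rw [integral_pow_succ_mpLaw hγ.le,
    show (1 - √γ) ^ 2 = 1 + γ - 2 * √γ by linear_combination hs,
    show (1 + √γ) ^ 2 = 1 + γ + 2 * √γ by linear_combination hs,
    integral_pow_mul_sqrt_sub_mul_sub (by positivity), mul_pow, hs,
    show (2 : ℝ) ^ 2 * γ / 4 = γ by ring, mul_div_right_comm,
    show π / 2 * (2 ^ 2 * γ) / (2 * π * γ) = 1 by field_simp, one_mul]

theorem mp_moments (γ : ℝ) (hγ : 0 < γ) (k : ℕ) (hk : 1 ≤ k) :
    ∫ x, x ^ k ∂(mpLaw γ)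
      = ∑ r ∈ Finset.Icc 1 k,
          (1 / (r : ℝ)) * (k.choose (r - 1) : ℝ) * ((k - 1).choose (r - 1) : ℝ) *
            γ ^ (r - 1) := by
  obtain ⟨m, rfl⟩ : ∃ m, k = m + 1 := ⟨k - 1, by omega⟩
  rw [integral_pow_succ_mpLaw_eq_sum_catalan hγ,
    sum_choose_two_mul_mul_catalan_mul_pow_mul_one_add_pow,
    ← Ico_add_one_right_eq_Icc, sum_Ico_eq_sum_range, Nat.add_sub_cancel]
  refine sum_congr rfl fun r hr => ?_
  have hnarayana := congrArg (Nat.cast (R := ℝ))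
    (Nat.succ_mul_sum_choose_two_mul_mul_catalan_mul_choose (Nat.lt_succ_iff.mp (mem_range.mp hr)))
  rw [Nat.cast_mul, Nat.cast_mul] at hnarayana
  have hr0 : ((r + 1 : ℕ) : ℝ) ≠ 0 := by positivity
  rw [add_tsub_cancel_left, Nat.add_sub_cancel, add_comm 1 r, mul_assoc (1 / _), ← hnarayana]
  field_simp
end
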